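/- Let Ψ: ℤ → ℂ, let F: ℤ → GL(2,ℂ) satisfy F_{k+1} = L_k(1)·F_k for all k, and set S_k := F_k⁻¹·𝐈·F_k. Then for every k ∈ ℤ one has 1 + ⟨S_k, S_{k-1}⟩ ≠ 0 and F_k⁻¹·L_{k-1}(1)·F_k = 𝕀 + (1/2)[S_k, S_{k-1}]/(1 + ⟨S_k, S_{k-1}⟩), where (1/2)[S_k,S_{k-1}] is the matrix representing the cross product S_k × S_{k-1}. -/

import Mathlib

open Matrix

noncomputable section

/-- `𝐈 = i σ₃`. -/
def matI : Matrix (Fin 2) (Fin 2) ℂ := !![Complex.I, 0; 0, -Complex.I]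

/-- The `su(2)` inner product `⟨X,Y⟩ = -(1/2) tr (XY)`. -/
def suInner (X Y : Matrix (Fin 2) (Fin 2) ℂ) : ℝ := (-(Matrix.trace (X * Y)) / 2).re

/-- The (gauged) Ablowitz–Ladik Lax matrix `L_k(μ)`. -/
def Lmat (Ψ : ℤ → ℂ) (μ : ℂ) (k : ℤ) : Matrix (Fin 2) (Fin 2) ℂ :=
  !![1, Ψ k; -(starRingEnd ℂ) (Ψ k), 1] * !![μ, 0; 0, μ⁻¹]

/-- For `S_k = F_k⁻¹ 𝐈 F_k` one has
`F_k⁻¹ L_{k-1}(1) F_k = 𝕀 + (S_k × S_{k-1})/(1 + ⟨S_k, S_{k-1}⟩)`, the cross product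
being represented by `(1/2)[S_k, S_{k-1}]`. -/
theorem gauge_L_prev_eq_id_add_cross (Ψ : ℤ → ℂ) (F : ℤ → Matrix (Fin 2) (Fin 2) ℂ)
    (hFunit : ∀ k : ℤ, IsUnit (F k))
    (hFrec : ∀ k : ℤ, F (k + 1) = Lmat Ψ 1 k * F k)
    (S : ℤ → Matrix (Fin 2) (Fin 2) ℂ)
    (hS : ∀ k : ℤ, S k = (F k)⁻¹ * matI * F k) :
    ∀ k : ℤ,
      1 + suInner (S k) (S (k - 1)) ≠ 0 ∧
      (F k)⁻¹ * Lmat Ψ 1 (k - 1) * F k =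
        1 + (1 / (1 + suInner (S k) (S (k - 1)))) • ((1 / 2 : ℝ) • ⁅S k, S (k - 1)⁆) := by
  intro k
  have hk1 : k - 1 + 1 = k := by ring
  set ψ := Ψ (k - 1) with hψ
  set r : ℝ := Complex.normSq ψ with hr
  have hrpos : (0:ℝ) ≤ r := Complex.normSq_nonneg ψ
  have hdR : (1 + r : ℝ) ≠ 0 := by positivity
  have h1rC : (1 + (r:ℂ)) ≠ 0 := by
    intro h
    apply hdR
    exact_mod_cast congrArg Complex.re (by push_cast at h ⊢; exact h : ((1 + r : ℝ) : ℂ) = 0)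
  have hmc : ψ * (starRingEnd ℂ) ψ = (r : ℂ) := by rw [hr, Complex.mul_conj]
  have hmc2 : (starRingEnd ℂ) ψ * ψ = (r : ℂ) := by rw [mul_comm, hmc]
  set dC : ℂ := ((1 + r : ℝ) : ℂ) with hdC
  have hdC0 : dC ≠ 0 := Complex.ofReal_ne_zero.mpr hdR
  have hdCψ : dC = 1 + ψ * (starRingEnd ℂ) ψ := by rw [hmc, hdC]; push_cast; ring
  set Lc : Matrix (Fin 2) (Fin 2) ℂ := !![1, ψ; -(starRingEnd ℂ) ψ, 1] with hLc
  set Linv : Matrix (Fin 2) (Fin 2) ℂ := dC⁻¹ • !![1, -ψ; (starRingEnd ℂ) ψ, 1] with hLinv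
  have hLmat : Lmat Ψ 1 (k - 1) = Lc := by
    rw [Lmat, inv_one, ← Matrix.one_fin_two, mul_one]
  have hLLinv : Lc * Linv = 1 := by
    ext i j
    fin_cases i <;> fin_cases j <;>
      · simp [hLc, hLinv, Matrix.mul_apply, Fin.sum_univ_two, Matrix.one_apply, hdC]
        try push_cast
        try field_simp
        try ring_nf
        try simp only [hmc, hmc2]
        try push_cast
        try field_simp
        try ring
  have hLinvLc : Linv * Lc = 1 := mul_eq_one_comm.mp hLLinv
  have hM : F k = Lc * F (k - 1) := by
    have := hFrec (k - 1); rw [hk1] at this; rw [this, hLmat]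
  have hN : F (k - 1) = Linv * F k := by
    rw [hM, ← Matrix.mul_assoc, hLinvLc, Matrix.one_mul]
  have hMdet : IsUnit (F k).det := (Matrix.isUnit_iff_isUnit_det _).mp (hFunit k)
  have hMinvM : (F k)⁻¹ * F k = 1 := Matrix.nonsing_inv_mul _ hMdet
  have hMMinv : F k * (F k)⁻¹ = 1 := Matrix.mul_nonsing_inv _ hMdet
  have hNinv : (F (k - 1))⁻¹ = (F k)⁻¹ * Lc := by
    apply Matrix.inv_eq_left_inv
    rw [hN, Matrix.mul_assoc, ← Matrix.mul_assoc Lc, hLLinv, Matrix.one_mul, hMinvM]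
  set A : Matrix (Fin 2) (Fin 2) ℂ := Lc * matI * Linv with hA
  have hSk1 : S (k - 1) = (F k)⁻¹ * A * F k := by
    rw [hS (k - 1), hNinv, hN, hA]
    simp only [Matrix.mul_assoc]
  have cancel : ∀ X : Matrix (Fin 2) (Fin 2) ℂ, F k * ((F k)⁻¹ * X) = X := by
    intro X; rw [← Matrix.mul_assoc, hMMinv, Matrix.one_mul]
  have hSS : S k * S (k - 1) = (F k)⁻¹ * (matI * A) * F k := by
    rw [hS k, hSk1]
    simp only [Matrix.mul_assoc]
    rw [cancel]
  have hSS' : S (k - 1) * S k = (F k)⁻¹ * (A * matI) * F k := by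
    rw [hS k, hSk1]
    simp only [Matrix.mul_assoc]
    rw [cancel]
  have htrconj : ∀ X : Matrix (Fin 2) (Fin 2) ℂ,
      Matrix.trace ((F k)⁻¹ * X * F k) = Matrix.trace X := by
    intro X
    rw [Matrix.trace_mul_cycle, hMMinv, Matrix.one_mul]
  have hsne : (1 + ψ * (starRingEnd ℂ) ψ) ≠ 0 := by rw [hmc]; exact h1rC
  have hAe : A = dC⁻¹ • !![Complex.I * (1 - ψ * (starRingEnd ℂ) ψ), -(2 * Complex.I * ψ);
      -(2 * Complex.I * (starRingEnd ℂ) ψ), -(Complex.I * (1 - ψ * (starRingEnd ℂ) ψ))] := by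
    rw [hA, hLc, hLinv]
    ext i j
    fin_cases i <;> fin_cases j <;>
      · simp [matI, Matrix.mul_apply, Fin.sum_univ_two, Matrix.smul_apply]
        try ring_nf
        try simp [Complex.I_sq]
        try ring_nf
        try ring
  have hcommE : matI * A - A * matI = dC⁻¹ • !![0, 4 * ψ; -(4 * (starRingEnd ℂ) ψ), 0] := by
    rw [hAe]
    ext i j
    fin_cases i <;> fin_cases j <;>
      · simp [matI, Matrix.mul_apply, Fin.sum_univ_two, Matrix.smul_apply, Matrix.sub_apply]
        try ring_nf
        try simp [Complex.I_sq]
        try ring_nf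
        try ring
  have htrA : Matrix.trace (matI * A) = ((-2 * (1 - r) / (1 + r) : ℝ) : ℂ) := by
    rw [hAe]
    simp only [Matrix.mul_smul, Matrix.trace_smul]
    rw [show ((-2 * (1 - r) / (1 + r) : ℝ) : ℂ) = -2 * (1 - ψ * (starRingEnd ℂ) ψ) / (1 + ψ * (starRingEnd ℂ) ψ) by
      rw [hmc]; push_cast; ring, hdCψ]
    simp [matI, Matrix.trace_fin_two, Matrix.mul_apply, Fin.sum_univ_two]
    try field_simp
    try ring_nf
    try simp [Complex.I_sq]
    try ring_nf
    try ring
  have hinner : suInner (S k) (S (k - 1)) = (1 - r) / (1 + r) := by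
    rw [suInner, hSS, htrconj, htrA]
    have : (-(((-2 * (1 - r) / (1 + r) : ℝ) : ℂ)) / 2) = (((1 - r) / (1 + r) : ℝ) : ℂ) := by
      push_cast; field_simp
    rw [this, Complex.ofReal_re]
  have hone : 1 + suInner (S k) (S (k - 1)) = 2 / (1 + r) := by
    rw [hinner]; field_simp; ring
  have hne : 1 + suInner (S k) (S (k - 1)) ≠ 0 := by
    rw [hone]; positivity
  refine ⟨hne, ?_⟩
  have hcoef : 1 / (1 + suInner (S k) (S (k - 1))) = (1 + r) / 2 := by
    rw [hone]
    rw [one_div_div]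
  have hLid : Lc = 1 + ((1 + r) / 2 : ℝ) • ((1 / 2 : ℝ) • (matI * A - A * matI)) := by
    rw [hcommE]
    ext i j
    fin_cases i <;> fin_cases j <;>
      · simp [hLc, Matrix.one_apply, Matrix.smul_apply, Complex.real_smul, hdC]
        try push_cast
        try field_simp
        try ring
  have hlie : ⁅S k, S (k - 1)⁆ = (F k)⁻¹ * (matI * A - A * matI) * F k := by
    rw [Ring.lie_def, hSS, hSS', Matrix.mul_sub, Matrix.sub_mul]
  rw [hLmat, hcoef, hlie]
  calc (F k)⁻¹ * Lc * F k
      = (F k)⁻¹ * (1 + ((1 + r) / 2 : ℝ) • ((1 / 2 : ℝ) • (matI * A - A * matI))) * F k := by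
        rw [← hLid]
    _ = 1 + ((1 + r) / 2 : ℝ) • ((1 / 2 : ℝ) •
          ((F k)⁻¹ * (matI * A - A * matI) * F k)) := by
        rw [Matrix.mul_add, Matrix.add_mul, Matrix.mul_one, hMinvM]
        congr 1
        rw [Matrix.mul_smul, Matrix.smul_mul, Matrix.mul_smul, Matrix.smul_mul]
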